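/- arXiv:1302.4014 — 7 statements merged into one kernel-verified Lean document; each statement's English description precedes it below -/
import Mathlib

section
/- Let h : ℕ → ℕ and p ∈ (0,1), and suppose there exists k ∈ (0,1) such that for all sufficiently large N: (1 + (1/p - 1)·k)·h(N) > N ≥ h(N) > p·N > 0. Then for all sufficiently large N, if X_N is a binomial random variable with parameters N and p, we have P(X_N = h(N)) ≤ P(X_N ≥ h(N)) ≤ (1/(1-k))·P(X_N = h(N)). -/
/-!
Write `T j = P(X_N = j)`. The ratio of consecutive terms is
`T (j+1) / T j = p (N - j) / ((1 - p) (j + 1))`, and the hypothesis on `h(N)` makes it at most `k`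
for all `j ≥ h(N)`. The tail from `h(N)` is therefore dominated by a geometric series with ratio
`k` started at `T (h N)`, whose sum is at most `T (h N) / (1 - k)`.
-/

open Filter Finset

section GeometricDomination

variable {a : ℕ → ℝ} {k : ℝ} {b N : ℕ}

lemma le_pow_mul_of_succ_le_mul (hk : 0 ≤ k) (hstep : ∀ j, b ≤ j → j < N → a (j + 1) ≤ k * a j) :
    ∀ i, b + i ≤ N → a (b + i) ≤ k ^ i * a b
  | 0, _ => by simp
  | i + 1, hi => calc
      a (b + (i + 1)) ≤ k * a (b + i) := hstep (b + i) (by omega) (by omega)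
      _ ≤ k * (k ^ i * a b) := by
          gcongr; exact le_pow_mul_of_succ_le_mul hk hstep i (by omega)
      _ = k ^ (i + 1) * a b := by ring

lemma sum_Icc_le_div_one_sub_of_succ_le_mul (hk0 : 0 ≤ k) (hk1 : k < 1) (hb : 0 ≤ a b)
    (hstep : ∀ j, b ≤ j → j < N → a (j + 1) ≤ k * a j) :
    ∑ j ∈ Icc b N, a j ≤ a b / (1 - k) := calc
  ∑ j ∈ Icc b N, a j = ∑ i ∈ range (N + 1 - b), a (b + i) := by
    rw [← Ico_add_one_right_eq_Icc, sum_Ico_eq_sum_range]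
  _ ≤ ∑ i ∈ range (N + 1 - b), k ^ i * a b :=
    sum_le_sum fun i hi ↦ le_pow_mul_of_succ_le_mul hk0 hstep i (by simp at hi; omega)
  _ = (∑ i ∈ Ico 0 (N + 1 - b), k ^ i) * a b := by rw [sum_mul, range_eq_Ico]
  _ ≤ (k ^ 0 / (1 - k)) * a b := by gcongr; exact geom_sum_Ico_le_of_lt_one hk0 hk1
  _ = a b / (1 - k) := by ring

end GeometricDomination

section BinomialTerm

/-- `binomialTerm N p j = P(X_N = j)` for `X_N ~ b(N, p)`. -/
def binomialTerm (N : ℕ) (p : ℝ) (j : ℕ) : ℝ := p ^ j * (1 - p) ^ (N - j) * N.choose j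

variable {N j : ℕ} {p k : ℝ}

lemma binomialTerm_nonneg (hp0 : 0 ≤ p) (hp1 : p ≤ 1) : 0 ≤ binomialTerm N p j := by
  unfold binomialTerm
  have : 0 ≤ 1 - p := by linarith
  positivity

lemma binomialTerm_succ_mul (hj : j < N) :
    binomialTerm N p (j + 1) * ((j + 1) * (1 - p)) = binomialTerm N p j * ((N - j) * p) := by
  have hchoose : (N.choose (j + 1) : ℝ) * (j + 1) = N.choose j * (N - j) := by
    rw [← Nat.cast_sub hj.le]
    exact_mod_cast N.choose_succ_right_eq j
  have hexp : N - j = N - (j + 1) + 1 := by omega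
  unfold binomialTerm
  rw [hexp, pow_succ]
  linear_combination p ^ (j + 1) * (1 - p) ^ (N - (j + 1)) * (1 - p) * hchoose

lemma binomialTerm_succ_le_mul {b : ℕ} (hp0 : 0 < p) (hp1 : p < 1) (hk : 0 ≤ k)
    (hb : (N : ℝ) < (1 + (1 / p - 1) * k) * b) (hbj : b ≤ j) (hj : j < N) :
    binomialTerm N p (j + 1) ≤ k * binomialTerm N p j := by
  have hratio : p * (N - j) ≤ k * (1 - p) * (j + 1) := by
    have hbj' : (b : ℝ) ≤ j := by exact_mod_cast hbj
    have hpb : p * N < p * b + (1 - p) * k * b := by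
      have := mul_lt_mul_of_pos_left hb hp0
      field_simp at this
      linarith
    nlinarith [mul_nonneg (sub_nonneg.2 hp1.le) hk]
  have hpos : 0 < ((j : ℝ) + 1) * (1 - p) := mul_pos (by positivity) (by linarith)
  refine le_of_mul_le_mul_right ?_ hpos
  rw [binomialTerm_succ_mul hj]
  have := binomialTerm_nonneg (N := N) (j := j) hp0.le hp1.le
  nlinarith

end BinomialTerm

theorem binomial_tail_comparable_to_point_mass
    (h : ℕ → ℕ) (p : ℝ) (hp : p ∈ Set.Ioo (0:ℝ) 1)
    (k : ℝ) (hk : k ∈ Set.Ioo (0:ℝ) 1)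
    (hcond : ∀ᶠ N : ℕ in atTop,
      (1 + (1/p - 1) * k) * (h N : ℝ) > (N : ℝ) ∧ N ≥ h N ∧
        (h N : ℝ) > p * N ∧ 0 < p * (N : ℝ)) :
    ∀ᶠ N : ℕ in atTop,
      (p ^ (h N) * (1-p) ^ (N - h N) * (N.choose (h N)) : ℝ) ≤
        ∑ j ∈ Finset.Icc (h N) N, p ^ j * (1-p) ^ (N - j) * (N.choose j) ∧
      ∑ j ∈ Finset.Icc (h N) N, p ^ j * (1-p) ^ (N - j) * (N.choose j) ≤
        (1/(1-k)) * (p ^ (h N) * (1-p) ^ (N - h N) * (N.choose (h N))) := by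
  obtain ⟨hp0, hp1⟩ := hp
  obtain ⟨hk0, hk1⟩ := hk
  filter_upwards [hcond] with N hN
  obtain ⟨hlarge, hle, -⟩ := hN
  change binomialTerm N p (h N) ≤ ∑ j ∈ Icc (h N) N, binomialTerm N p j ∧
    ∑ j ∈ Icc (h N) N, binomialTerm N p j ≤ 1 / (1 - k) * binomialTerm N p (h N)
  have hnonneg : ∀ j, 0 ≤ binomialTerm N p j := fun j ↦ binomialTerm_nonneg hp0.le hp1.le
  refine ⟨single_le_sum (fun j _ ↦ hnonneg j) (mem_Icc.2 ⟨le_rfl, hle⟩), ?_⟩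
  rw [one_div_mul_eq_div]
  exact sum_Icc_le_div_one_sub_of_succ_le_mul hk0.le hk1 (hnonneg _)
    fun j hbj hj ↦ binomialTerm_succ_le_mul hp0 hp1 hk0.le hlarge hbj hj
end

section
/- There exists a unique κ ∈ (0, 1/2) such that (1/2 - κ)^{1-2κ} = (1-κ)^{2-2κ}. -/
open Real Set

noncomputable def Fk (x : ℝ) : ℝ := (1 - x) * Real.log (1 - x) - (1/2 - x) * Real.log (1/2 - x)

lemma Fk_cont : Continuous Fk := by
  have h := Real.continuous_mul_log
  exact (h.comp (continuous_const.sub continuous_id)).sub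
    (h.comp (continuous_const.sub continuous_id))

lemma Fk_anti : StrictAntiOn Fk (Icc 0 (1/2)) := by
  apply strictAntiOn_of_deriv_neg (convex_Icc _ _) Fk_cont.continuousOn
  intro x hx
  rw [interior_Icc] at hx
  have h1 : (0:ℝ) < 1 - x := by linarith [hx.2]
  have h2 : (0:ℝ) < 1/2 - x := by linarith [hx.2]
  have d1 : HasDerivAt (fun y => (1 - y) * Real.log (1 - y)) ((Real.log (1-x) + 1) * (-1)) x :=
    (Real.hasDerivAt_mul_log h1.ne').comp x (by simpa using (hasDerivAt_id x).const_sub (1:ℝ))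
  have d2 : HasDerivAt (fun y => (1/2 - y) * Real.log (1/2 - y)) ((Real.log (1/2-x) + 1) * (-1)) x :=
    (Real.hasDerivAt_mul_log h2.ne').comp x (by simpa using (hasDerivAt_id x).const_sub (1/2:ℝ))
  have d : HasDerivAt Fk ((Real.log (1-x)+1)*(-1) - (Real.log (1/2-x)+1)*(-1)) x := d1.sub d2
  rw [d.deriv]
  have : Real.log (1/2 - x) < Real.log (1 - x) := Real.log_lt_log h2 (by linarith)
  linarith

lemma Fk_zero : Fk 0 = (1/2) * Real.log 2 := by
  simp [Fk, Real.log_one]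

lemma Fk_half : Fk (1/2) = -((1/2) * Real.log 2) := by
  unfold Fk
  rw [show (1:ℝ) - 1/2 = 2⁻¹ by norm_num, show (1:ℝ)/2 - 1/2 = 0 by norm_num, Real.log_inv]
  simp

lemma key (κ : ℝ) (hκ : κ ∈ Set.Ioo (0:ℝ) (1/2)) :
    ((1/2 - κ) ^ (1 - 2*κ) = (1 - κ) ^ (2 - 2*κ)) ↔ Fk κ = 0 := by
  have h1 : (0:ℝ) < 1 - κ := by linarith [hκ.2]
  have h2 : (0:ℝ) < 1/2 - κ := by linarith [hκ.2]
  rw [Real.rpow_def_of_pos h2, Real.rpow_def_of_pos h1, Real.exp_eq_exp]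
  constructor
  · intro h; unfold Fk; nlinarith [h]
  · intro h; unfold Fk at h; nlinarith [h]

theorem exists_unique_kappa :
    ∃! κ : ℝ, κ ∈ Set.Ioo (0:ℝ) (1/2) ∧
      (1/2 - κ) ^ (1 - 2*κ) = (1 - κ) ^ (2 - 2*κ) := by
  have hlog2 : 0 < Real.log 2 := Real.log_pos (by norm_num)
  have h0 : 0 < Fk 0 := by rw [Fk_zero]; positivity
  have hh : Fk (1/2) < 0 := by rw [Fk_half]; linarith
  have hsub : Icc (Fk (1/2)) (Fk 0) ⊆ Fk '' (Icc 0 (1/2)) :=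
    intermediate_value_Icc' (by norm_num) Fk_cont.continuousOn
  obtain ⟨c, hc, hFc⟩ := hsub ⟨hh.le, h0.le⟩
  have hc0 : c ≠ 0 := by rintro rfl; rw [hFc] at h0; exact lt_irrefl _ h0
  have hch : c ≠ 1/2 := by rintro rfl; rw [hFc] at hh; exact lt_irrefl _ hh
  have hcIoo : c ∈ Set.Ioo (0:ℝ) (1/2) :=
    ⟨lt_of_le_of_ne hc.1 (Ne.symm hc0), lt_of_le_of_ne hc.2 hch⟩
  refine ⟨c, ⟨hcIoo, (key c hcIoo).mpr hFc⟩, ?_⟩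
  rintro y ⟨hy, hyeq⟩
  have hFy : Fk y = 0 := (key y hy).mp hyeq
  exact Fk_anti.injOn (Ioo_subset_Icc_self hy) hc (by rw [hFy, hFc])
end

section
/- Let κ be the unique solution in (0,1/2) of (1/2-κ)^{1-2κ} = (1-κ)^{2-2κ}. Then for every τ with κ < τ < 1/2, the quantity r(τ) := (1/2 - τ)^{1-2τ} / (1-τ)^{2-2τ} satisfies r(τ) > 1, and for every τ with 0 < τ < κ we have r(τ) < 1. -/
/-! Since `x ^ (2 * x) = exp (-2 * negMulLog x)`, the ratio is `exp (2 * D τ)` with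
`D τ = negMulLog (1 - τ) - negMulLog (1/2 - τ)`. Its derivative `log (1 - τ) - log (1/2 - τ)`
is positive, so `D` is strictly increasing on `τ < 1/2` and vanishes at `κ`; the ratio is
therefore above `1` exactly to the right of `κ`. -/

open Real Set

lemma strictMonoOn_negMulLog_sub_sub_negMulLog_sub {a b : ℝ} (hab : a < b) :
    StrictMonoOn (fun τ => negMulLog (b - τ) - negMulLog (a - τ)) (Iio a) := by
  have hderiv : ∀ τ ∈ Iio a, HasDerivAt (fun τ => negMulLog (b - τ) - negMulLog (a - τ))
      (log (b - τ) - log (a - τ)) τ := by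
    intro τ (hτ : τ < a)
    have hshift : ∀ c : ℝ, τ < c →
        HasDerivAt (fun τ => negMulLog (c - τ)) (-(-log (c - τ) - 1)) τ := fun c hc =>
      (hasDerivAt_negMulLog (sub_pos.2 hc).ne').comp_const_sub c τ
    exact ((hshift b (hτ.trans hab)).fun_sub (hshift a hτ)).congr_deriv (by ring)
  refine strictMonoOn_of_deriv_pos (convex_Iio a)
    (fun τ hτ => (hderiv τ hτ).continuousAt.continuousWithinAt) fun τ hτ => ?_
  rw [interior_Iio] at hτ
  rw [(hderiv τ hτ).deriv, sub_pos]
  exact log_lt_log (sub_pos.2 hτ) (by linarith [mem_Iio.1 hτ])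

lemma ratio_eq_exp_negMulLog {τ : ℝ} (hτ : τ < 1/2) :
    (1/2 - τ) ^ (1 - 2*τ) / (1 - τ) ^ (2 - 2*τ)
      = exp (2 * (negMulLog (1 - τ) - negMulLog (1/2 - τ))) := by
  rw [rpow_def_of_pos (by linarith), rpow_def_of_pos (by linarith), ← exp_sub, negMulLog,
    negMulLog]
  ring_nf

theorem ratio_above_one_iff_tau_above_kappa
    (κ : ℝ) (hκ : κ ∈ Set.Ioo (0:ℝ) (1/2))
    (hκeq : (1/2 - κ) ^ (1 - 2*κ) = (1 - κ) ^ (2 - 2*κ)) :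
    (∀ τ : ℝ, κ < τ → τ < 1/2 →
      (1/2 - τ) ^ (1 - 2*τ) / (1 - τ) ^ (2 - 2*τ) > 1)
    ∧ (∀ τ : ℝ, 0 < τ → τ < κ →
      (1/2 - τ) ^ (1 - 2*τ) / (1 - τ) ^ (2 - 2*τ) < 1) := by
  set D : ℝ → ℝ := fun τ => negMulLog (1 - τ) - negMulLog (1/2 - τ)
  have hD : StrictMonoOn D (Iio (1/2)) :=
    strictMonoOn_negMulLog_sub_sub_negMulLog_sub (by norm_num)
  have hκD : D κ = 0 := by
    have h := ratio_eq_exp_negMulLog hκ.2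
    rw [hκeq, div_self (rpow_pos_of_pos (by linarith [hκ.2]) _).ne', eq_comm, exp_eq_one_iff]
      at h
    linarith
  constructor
  · intro τ hκτ hτ
    rw [ratio_eq_exp_negMulLog hτ, gt_iff_lt, one_lt_exp_iff]
    linarith [hD hκ.2 hτ hκτ]
  · intro τ _ hτκ
    have hτ : τ < 1/2 := hτκ.trans hκ.2
    rw [ratio_eq_exp_negMulLog hτ, exp_lt_one_iff]
    linarith [hD hτ hκ.2 hτκ]
end

section
/- Consider n nodes arranged in a circle, each assigned a type in {α, β}, with window parameter w and tolerance τ ≤ 1/2. Define the harmony index H of a configuration to be the sum over all nodes u of the number of nodes in the neighbourhood N(u) = [u-w, u+w] (of size 2w+1, indices mod n) having the same type as u. If a single unhappy node changes type in such a way that after the change it has strictly more nodes of its new type in its neighbourhood than it previously had of its old type, then the harmony index strictly increases. -/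
/-- The harmony index: the sum over all nodes `u` of the number of nodes in
the neighbourhood `[u-w, u+w]` having the same type as `u`. -/
noncomputable def harmonyIndex (n w : ℕ) [NeZero n] (c : ZMod n → Bool) : ℕ :=
  ∑ u : ZMod n,
    ((Finset.Icc (-(w:ℤ)) (w:ℤ)).filter (fun i : ℤ => c (u + (i : ZMod n)) = c u)).card

/-!
Every agreeing ordered pair `(v, v + i)` is counted once from `v` with offset `i` and once from
`v + i` with offset `-i`. Changing the type of `u` only affects the pairs through `u`, so for a
symmetric offset set the harmony index changes by exactly twice the change of `u`'s own count.
-/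

open Finset Function

section Recolouring

variable {α β : Type*} [DecidableEq α] [DecidableEq β]

def agreementGain (c : α → β) (u : α) (b : β) (z : α) : ℤ :=
  (if update c u b z = b then 1 else 0) - (if c z = c u then 1 else 0)

theorem ite_update_eq_sub_ite_eq (c : α → β) (u : α) (b : β) (x y : α) :
    ((if update c u b x = update c u b y then 1 else 0) - (if c x = c y then 1 else 0) : ℤ) =
      (if x = u then agreementGain c u b y else 0) +
        (if y = u then agreementGain c u b x else 0) := by
  by_cases hx : x = u <;> by_cases hy : y = u <;>
    simp [agreementGain, hx, hy, update_of_ne, eq_comm]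

end Recolouring

section OffsetCounts

variable {G β : Type*} [AddGroupWithOne G] [DecidableEq β]

def sameTypeCount (s : Finset ℤ) (c : G → β) (v : G) : ℕ :=
  (s.filter fun i : ℤ => c (v + (i : G)) = c v).card

theorem sameTypeCount_eq_sum (s : Finset ℤ) (c : G → β) (v : G) :
    (sameTypeCount s c v : ℤ) = ∑ i ∈ s, if c (v + (i : G)) = c v then 1 else 0 := by
  rw [sameTypeCount, card_filter]; push_cast; rfl

variable [DecidableEq G]

theorem sum_agreementGain (s : Finset ℤ) (c : G → β) (u : G) (b : β) :
    ∑ i ∈ s, agreementGain c u b (u + i) =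
      (sameTypeCount s (update c u b) u : ℤ) - sameTypeCount s c u := by
  simp [agreementGain, sameTypeCount_eq_sum, sum_sub_distrib]

theorem sum_sameTypeCount_update [Fintype G] (s : Finset ℤ) (hs : ∀ i ∈ s, -i ∈ s)
    (c : G → β) (u : G) (b : β) :
    (∑ v, sameTypeCount s (update c u b) v : ℤ) - ∑ v, sameTypeCount s c v =
      2 * ((sameTypeCount s (update c u b) u : ℤ) - sameTypeCount s c u) := by
  set g := agreementGain c u b
  have hneg : ∑ i ∈ s, g (u - i) = ∑ i ∈ s, g (u + i) :=
    sum_equiv (Equiv.neg ℤ) (fun i => ⟨fun h => hs i h, fun h => by simpa using hs _ h⟩)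
      (fun i _ => by simp [sub_eq_add_neg])
  calc (∑ v, sameTypeCount s (update c u b) v : ℤ) - ∑ v, sameTypeCount s c v
      = ∑ i ∈ s, ∑ v, ((if update c u b (v + (i : G)) = update c u b v then 1 else 0) -
          (if c (v + (i : G)) = c v then 1 else 0) : ℤ) := by
        push_cast
        simp only [sameTypeCount_eq_sum, ← sum_sub_distrib]
        exact sum_comm
    _ = ∑ i ∈ s, ∑ v, ((if v = u - (i : G) then g v else 0) +
          (if v = u then g (v + (i : G)) else 0)) := by
        simp only [ite_update_eq_sub_ite_eq, ← eq_sub_iff_add_eq, g]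
    _ = ∑ i ∈ s, g (u - i) + ∑ i ∈ s, g (u + i) := by
        simp [sum_add_distrib]
    _ = 2 * ((sameTypeCount s (update c u b) u : ℤ) - sameTypeCount s c u) := by
        rw [hneg, sum_agreementGain]; ring

end OffsetCounts

theorem harmonyIndex_eq_sum_sameTypeCount (n w : ℕ) [NeZero n] (c : ZMod n → Bool) :
    harmonyIndex n w c = ∑ v, sameTypeCount (Icc (-(w : ℤ)) w) c v :=
  rfl

theorem harmony_index_increases_general
    (n w : ℕ) [NeZero n]
    (c : ZMod n → Bool) (u : ZMod n)
    (c' : ZMod n → Bool) (hc' : c' = Function.update c u (!c u))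
    (hmore :
      ((Finset.Icc (-(w:ℤ)) (w:ℤ)).filter
          (fun i : ℤ => c (u + (i : ZMod n)) = c u)).card <
        ((Finset.Icc (-(w:ℤ)) (w:ℤ)).filter
          (fun i : ℤ => c' (u + (i : ZMod n)) = c' u)).card) :
    harmonyIndex n w c < harmonyIndex n w c' := by
  subst hc'
  have hsymm : ∀ i ∈ Icc (-(w : ℤ)) w, -i ∈ Icc (-(w : ℤ)) w := by
    intro i hi; rw [mem_Icc] at hi ⊢; omega
  have key := sum_sameTypeCount_update _ hsymm c u (!c u)
  change sameTypeCount _ c u < sameTypeCount _ _ u at hmore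
  rw [harmonyIndex_eq_sum_sameTypeCount, harmonyIndex_eq_sum_sameTypeCount]
  zify
  push_cast at key ⊢
  omega

theorem harmony_index_increases
    (n w : ℕ) [NeZero n] (τ : ℝ) (hτ : τ ≤ 1/2)
    (c : ZMod n → Bool) (u : ZMod n)
    (hunhappy :
      ((((Finset.Icc (-(w:ℤ)) (w:ℤ)).filter
          (fun i : ℤ => c (u + (i : ZMod n)) = c u)).card : ℝ) < τ * (2*(w:ℝ)+1)))
    (c' : ZMod n → Bool) (hc' : c' = Function.update c u (!c u))
    (hmore :
      ((Finset.Icc (-(w:ℤ)) (w:ℤ)).filter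
          (fun i : ℤ => c (u + (i : ZMod n)) = c u)).card <
        ((Finset.Icc (-(w:ℤ)) (w:ℤ)).filter
          (fun i : ℤ => c' (u + (i : ZMod n)) = c' u)).card) :
    harmonyIndex n w c < harmonyIndex n w c' :=
  harmony_index_increases_general n w c u c' hc' hmore
end

section
/- For the one-dimensional Schelling process with τ ≤ 1/2 on n nodes with window w, the harmony index is bounded above by n(2w+1), and since it strictly increases by at least 1 with every swap that occurs, the total number of stages at which a swap occurs is at most n(2w+1); in particular the process terminates. -/
/-!
Each of the `n` nodes has at most `2w+1` like-typed nodes in its window, so the harmony index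
never exceeds `n(2w+1)`. The index is non-decreasing and rises by at least one at every swap
stage, so before stage `t` there are at most `h(t) - h(0) ≤ n(2w+1)` swap stages.
-/

open Finset

theorem harmonyIndex_le (n w : ℕ) [NeZero n] (c : ZMod n → Bool) :
    harmonyIndex n w c ≤ n * (2 * w + 1) := by
  have hwindow : #(Icc (-(w : ℤ)) w) = 2 * w + 1 := by
    rw [Int.card_Icc]
    omega
  calc harmonyIndex n w c ≤ ∑ _u : ZMod n, #(Icc (-(w : ℤ)) w) :=
        sum_le_sum fun _ _ => card_filter_le _ _
    _ = n * (2 * w + 1) := by rw [sum_const, card_univ, ZMod.card, hwindow, smul_eq_mul]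

section StrictSteps

variable {f : ℕ → ℕ} {S : Finset ℕ}

theorem card_inter_range_add_le (hf : Monotone f) (hS : ∀ s ∈ S, f s < f (s + 1)) (t : ℕ) :
    #(S ∩ range t) + f 0 ≤ f t := by
  induction t with
  | zero => simp
  | succ t ih =>
    rw [range_add_one]
    by_cases ht : t ∈ S
    · rw [inter_insert_of_mem ht]
      have := card_insert_le t (S ∩ range t)
      have := hS t ht
      omega
    · rw [inter_insert_of_notMem ht]
      exact ih.trans (hf t.le_succ)

theorem card_le_of_monotone_of_le (hf : Monotone f) (hS : ∀ s ∈ S, f s < f (s + 1)) {B : ℕ}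
    (hB : ∀ s, f s ≤ B) : #S ≤ B := by
  obtain ⟨t, hSt⟩ := exists_nat_subset_range S
  have := card_inter_range_add_le hf hS t
  rw [inter_eq_left.mpr hSt] at this
  exact (Nat.le_of_add_right_le this).trans (hB t)

end StrictSteps

theorem schelling_process_terminates_general
    (n w : ℕ) [NeZero n]
    (c : ℕ → ZMod n → Bool) (swapStage : ℕ → Prop)
    (hmono : ∀ s, harmonyIndex n w (c s) ≤ harmonyIndex n w (c (s+1)))
    (hswap : ∀ s, swapStage s → harmonyIndex n w (c s) < harmonyIndex n w (c (s+1))) :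
    (∀ s, harmonyIndex n w (c s) ≤ n * (2*w+1)) ∧
    ∀ S : Finset ℕ, (∀ s ∈ S, swapStage s) → S.card ≤ n * (2*w+1) :=
  ⟨fun s => harmonyIndex_le n w (c s), fun _ hS =>
    card_le_of_monotone_of_le (monotone_nat_of_le_succ hmono) (fun s hs => hswap s (hS s hs))
      fun s => harmonyIndex_le n w (c s)⟩

theorem schelling_process_terminates
    (n w : ℕ) [NeZero n] (τ : ℝ) (hτ : τ ≤ 1/2)
    (c : ℕ → ZMod n → Bool) (swapStage : ℕ → Prop)
    (hmono : ∀ s, harmonyIndex n w (c s) ≤ harmonyIndex n w (c (s+1)))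
    (hswap : ∀ s, swapStage s → harmonyIndex n w (c s) < harmonyIndex n w (c (s+1))) :
    (∀ s, harmonyIndex n w (c s) ≤ n * (2*w+1)) ∧
    ∀ S : Finset ℕ, (∀ s ∈ S, swapStage s) → S.card ≤ n * (2*w+1) :=
  schelling_process_terminates_general n w c swapStage hmono hswap
end

section
/- Consider a two-colouring (types α, β) of the natural numbers with window parameter w ≥ 1, in which the node at position w has type α, and every α node at position ≥ w is 'happy' in the strong sense that for every α node u ≥ w, both the w positions immediately to its left and the w positions immediately to its right contain at least one α node, and the bias Θ(N(u)) = #α - #β over the 2w+1 positions [u-w, u+w] is at least 3. Define u_0 = w and u_{k+1} = the rightmost α node in [u_k - w, u_k + w]. Then for I_m = ∪_{k=0}^m [u_k - w, u_k + w] and m > (3/2)w, the bias satisfies Θ(I_m) > m - (3/2)w. -/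
/-- The bias of a finite set of positions: number of α (true) nodes minus
number of β (false) nodes. -/
def biasOf (c : ℕ → Bool) (I : Finset ℕ) : ℤ :=
  ((I.filter (fun v => c v = true)).card : ℤ) -
    ((I.filter (fun v => c v = false)).card : ℤ)

lemma bias_card (c : ℕ → Bool) (I : Finset ℕ) :
    biasOf c I = (I.card : ℤ) - 2 * ((I.filter (fun v => c v = false)).card : ℤ) := by
  have h : (I.filter (fun v => c v = true)).card
      + (I.filter (fun v => c v = false)).card = I.card := by
    have h0 := Finset.card_filter_add_card_filter_not
      (s := I) (p := fun v => c v = true)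
    simpa [Bool.not_eq_true] using h0
  unfold biasOf
  have h2 := congrArg (Nat.cast : ℕ → ℤ) h
  push_cast at h2
  linarith

lemma bias_union (c : ℕ → Bool) {s t : Finset ℕ} (h : Disjoint s t) :
    biasOf c (s ∪ t) = biasOf c s + biasOf c t := by
  unfold biasOf
  rw [Finset.filter_union, Finset.filter_union,
      Finset.card_union_of_disjoint
        (h.mono (Finset.filter_subset _ _) (Finset.filter_subset _ _)),
      Finset.card_union_of_disjoint
        (h.mono (Finset.filter_subset _ _) (Finset.filter_subset _ _))]
  push_cast
  ring

lemma bias_lower (c : ℕ → Bool) (w : ℕ) {X R N : Finset ℕ}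
    (hXN : X ⊆ N) (hRN : R ⊆ N) (hdisj : Disjoint X R)
    (hR : ∀ a ∈ R, c a = false)
    (hN3 : 3 ≤ biasOf c N) (hcard : N.card = 2 * w + 1) :
    (X.card : ℤ) + 2 * (R.card : ℤ) - 2 * (w : ℤ) + 2 ≤ biasOf c X := by
  have hβN : 2 * ((N.filter (fun v => c v = false)).card : ℤ) ≤ 2 * (w : ℤ) - 2 := by
    have h := bias_card c N
    rw [hcard] at h
    push_cast at h
    linarith
  have hsub : X.filter (fun v => c v = false) ∪ R ⊆ N.filter (fun v => c v = false) := by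
    intro a ha
    rcases Finset.mem_union.mp ha with h | h
    · rcases Finset.mem_filter.mp h with ⟨hx, hf⟩
      exact Finset.mem_filter.mpr ⟨hXN hx, hf⟩
    · exact Finset.mem_filter.mpr ⟨hRN h, hR a h⟩
  have hd : Disjoint (X.filter (fun v => c v = false)) R :=
    hdisj.mono_left (Finset.filter_subset _ _)
  have hcnt : (X.filter (fun v => c v = false)).card + R.card
      ≤ (N.filter (fun v => c v = false)).card := by
    rw [← Finset.card_union_of_disjoint hd]
    exact Finset.card_le_card hsub
  have hcnt' := (Nat.cast_le (α := ℤ)).mpr hcnt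
  push_cast at hcnt'
  rw [bias_card]
  linarith

theorem bias_of_union_of_neighbourhoods
    (w : ℕ) (hw : 1 ≤ w) (c : ℕ → Bool)
    (hcw : c w = true)
    (hhappy : ∀ v : ℕ, w ≤ v → c v = true →
      (∃ a ∈ Finset.Icc (v - w) (v - 1), c a = true) ∧
      (∃ a ∈ Finset.Icc (v + 1) (v + w), c a = true) ∧
      3 ≤ biasOf c (Finset.Icc (v - w) (v + w)))
    (u : ℕ → ℕ) (hu0 : u 0 = w)
    (hurec : ∀ k : ℕ, c (u (k+1)) = true ∧
      u (k+1) ∈ Finset.Icc (u k - w) (u k + w) ∧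
      ∀ a ∈ Finset.Icc (u k - w) (u k + w), c a = true → a ≤ u (k+1)) :
    ∀ m : ℕ, 2 * m > 3 * w →
      ((biasOf c ((Finset.range (m+1)).biUnion
          (fun k => Finset.Icc (u k - w) (u k + w))) : ℝ)
        > (m : ℝ) - 3 * (w : ℝ) / 2) := by
  -- basic facts about u
  have hctrue : ∀ k, c (u k) = true := by
    intro k
    cases k with
    | zero => rw [hu0]; exact hcw
    | succ n => exact (hurec n).1
  have hstep0 : ∀ k, w ≤ u k → u k < u (k+1) := by
    intro k hk
    obtain ⟨_, ⟨a, ha, hca⟩, _⟩ := hhappy (u k) hk (hctrue k)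
    rw [Finset.mem_Icc] at ha
    have hle : a ≤ u (k+1) :=
      (hurec k).2.2 a (Finset.mem_Icc.mpr ⟨by omega, ha.2⟩) hca
    omega
  have hge : ∀ k, w ≤ u k := by
    intro k
    induction k with
    | zero => omega
    | succ n ih => have := hstep0 n ih; omega
  have hstep : ∀ k, u k < u (k+1) := fun k => hstep0 k (hge k)
  have hle : ∀ k, u (k+1) ≤ u k + w := by
    intro k
    exact (Finset.mem_Icc.mp (hurec k).2.1).2
  -- all-β runs
  have hbeta : ∀ k a, u (k+1) < a → a ≤ u k + w → c a = false := by
    intro k a h1 h2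
    have h3 := hstep k
    have h4 := hge k
    by_contra h
    have hca : c a = true := by
      cases hc : c a
      · exact absurd hc h
      · rfl
    have : a ≤ u (k+1) := (hurec k).2.2 a (Finset.mem_Icc.mpr ⟨by omega, h2⟩) hca
    omega
  have hwin : ∀ k, 3 ≤ biasOf c (Finset.Icc (u k - w) (u k + w)) :=
    fun k => (hhappy (u k) (hge k) (hctrue k)).2.2
  have hwincard : ∀ k, (Finset.Icc (u k - w) (u k + w)).card = 2 * w + 1 := by
    intro k
    rw [Nat.card_Icc]
    have := hge k
    omega
  -- F k = bias of [0, u k + w]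
  set F : ℕ → ℤ := fun k => biasOf c (Finset.Icc 0 (u k + w)) with hF
  -- split lemma
  have hsplit : ∀ k, F (k+1)
      = F k + biasOf c (Finset.Icc (u k + w + 1) (u (k+1) + w)) := by
    intro k
    have hun : Finset.Icc 0 (u (k+1) + w)
        = Finset.Icc 0 (u k + w) ∪ Finset.Icc (u k + w + 1) (u (k+1) + w) := by
      ext x
      simp only [Finset.mem_Icc, Finset.mem_union]
      have h1 := hstep k
      have h2 := hle k
      omega
    have hdisj : Disjoint (Finset.Icc 0 (u k + w))
        (Finset.Icc (u k + w + 1) (u (k+1) + w)) := by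
      rw [Finset.disjoint_left]
      intro a ha hb
      rw [Finset.mem_Icc] at ha hb
      omega
    rw [hF]
    simp only
    rw [hun, bias_union c hdisj]
  -- bound (i): Θ(D_{k+1}) ≥ 2 - d_{k+1}
  have hbound1 : ∀ k,
      (2 : ℤ) - ((u (k+1) : ℤ) - (u k : ℤ))
        ≤ biasOf c (Finset.Icc (u k + w + 1) (u (k+1) + w)) := by
    intro k
    have h1 := hstep k
    have h2 := hle k
    have h3 := hge k
    have h4 := hge (k+1)
    have key := bias_lower c w
      (X := Finset.Icc (u k + w + 1) (u (k+1) + w))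
      (R := Finset.Icc (u (k+1) + 1) (u k + w))
      (N := Finset.Icc (u (k+1) - w) (u (k+1) + w))
      (by apply Finset.Icc_subset_Icc <;> omega)
      (by apply Finset.Icc_subset_Icc <;> omega)
      (by rw [Finset.disjoint_left]; intro a ha hb
          rw [Finset.mem_Icc] at ha hb; omega)
      (by intro a ha; rw [Finset.mem_Icc] at ha; exact hbeta k a (by omega) (by omega))
      (hwin (k+1)) (hwincard (k+1))
    have hcX : (Finset.Icc (u k + w + 1) (u (k+1) + w)).card = u (k+1) - u k := by
      rw [Nat.card_Icc]; omega
    have hcR : (Finset.Icc (u (k+1) + 1) (u k + w)).card = u k + w - u (k+1) := by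
      rw [Nat.card_Icc]; omega
    rw [hcX, hcR] at key
    have e1 : ((u (k+1) - u k : ℕ) : ℤ) = (u (k+1) : ℤ) - (u k : ℤ) := by
      push_cast [Nat.cast_sub (le_of_lt h1)]; ring
    have e2 : ((u k + w - u (k+1) : ℕ) : ℤ) = (u k : ℤ) + w - (u (k+1) : ℤ) := by
      have : u (k+1) ≤ u k + w := h2
      push_cast [Nat.cast_sub this]; ring
    rw [e1, e2] at key
    linarith
  -- bound (ii): Θ(D_{k+1} ∪ D_{k+2}) ≥ d_{k+2} - d_{k+1} + 2
  have hbound2 : ∀ k,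
      ((u (k+2) : ℤ) - (u (k+1) : ℤ)) - ((u (k+1) : ℤ) - (u k : ℤ)) + 2
        ≤ biasOf c (Finset.Icc (u k + w + 1) (u (k+2) + w)) := by
    intro k
    have h1 := hstep k
    have h1' : u (k+1) < u (k+2) := hstep (k+1)
    have h2 := hle k
    have h2' : u (k+2) ≤ u (k+1) + w := hle (k+1)
    have h3 := hge k
    have h4 := hge (k+2)
    have key := bias_lower c w
      (X := Finset.Icc (u k + w + 1) (u (k+2) + w))
      (R := Finset.Icc (u (k+1) + 1) (u k + w))
      (N := Finset.Icc (u (k+2) - w) (u (k+2) + w))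
      (by apply Finset.Icc_subset_Icc <;> omega)
      (by apply Finset.Icc_subset_Icc <;> omega)
      (by rw [Finset.disjoint_left]; intro a ha hb
          rw [Finset.mem_Icc] at ha hb; omega)
      (by intro a ha; rw [Finset.mem_Icc] at ha; exact hbeta k a (by omega) (by omega))
      (hwin (k+2)) (hwincard (k+2))
    have hcX : (Finset.Icc (u k + w + 1) (u (k+2) + w)).card = u (k+2) - u k := by
      rw [Nat.card_Icc]; omega
    have hcR : (Finset.Icc (u (k+1) + 1) (u k + w)).card = u k + w - u (k+1) := by
      rw [Nat.card_Icc]; omega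
    rw [hcX, hcR] at key
    have e1 : ((u (k+2) - u k : ℕ) : ℤ) = (u (k+2) : ℤ) - (u k : ℤ) := by
      have : u k ≤ u (k+2) := by omega
      push_cast [Nat.cast_sub this]; ring
    have e2 : ((u k + w - u (k+1) : ℕ) : ℤ) = (u k : ℤ) + w - (u (k+1) : ℤ) := by
      push_cast [Nat.cast_sub h2]; ring
    rw [e1, e2] at key
    linarith
  -- pair split: Θ(D_{k+1} ∪ D_{k+2}) = Θ(D_{k+1}) + Θ(D_{k+2})
  have hpairsplit : ∀ k, F (k+2) = F k + biasOf c (Finset.Icc (u k + w + 1) (u (k+2) + w)) := by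
    intro k
    have hun : Finset.Icc (u k + w + 1) (u (k+2) + w)
        = Finset.Icc (u k + w + 1) (u (k+1) + w)
          ∪ Finset.Icc (u (k+1) + w + 1) (u (k+2) + w) := by
      ext x
      simp only [Finset.mem_Icc, Finset.mem_union]
      have h1 := hstep k
      have h1' : u (k+1) < u (k+2) := hstep (k+1)
      omega
    have hdisj : Disjoint (Finset.Icc (u k + w + 1) (u (k+1) + w))
        (Finset.Icc (u (k+1) + w + 1) (u (k+2) + w)) := by
      rw [Finset.disjoint_left]
      intro a ha hb
      rw [Finset.mem_Icc] at ha hb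
      omega
    have hs1 : F (k+2) = F (k+1) + biasOf c (Finset.Icc (u (k+1) + w + 1) (u (k+2) + w)) :=
      hsplit (k+1)
    rw [hs1, hsplit k, hun, bias_union c hdisj]
    ring
  -- F 0 ≥ 3
  have hF0 : 3 ≤ F 0 := by
    have h := hwin 0
    have h0 : Finset.Icc (u 0 - w) (u 0 + w) = Finset.Icc 0 (u 0 + w) := by
      congr 1
      omega
    rw [h0] at h
    exact h
  -- main pairing induction
  have hmain : ∀ k : ℕ, 2 * F 0 + 2 * ((k : ℤ) + 1) + ((u (k+1) : ℤ) - (u k : ℤ))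
      - 2 * ((u 1 : ℤ) - (u 0 : ℤ)) ≤ F (k+1) + F k := by
    intro k
    induction k with
    | zero =>
      have h1 := hbound1 0
      have h2 := hsplit 0
      push_cast
      linarith
    | succ n ih =>
      have h2 := hbound2 n
      have hps := hpairsplit n
      have hgoal : 2 * F 0 + 2 * ((n : ℤ) + 1 + 1) + ((u (n+2) : ℤ) - (u (n+1) : ℤ))
          - 2 * ((u 1 : ℤ) - (u 0 : ℤ)) ≤ F (n+2) + F (n+1) := by
        linarith
      convert hgoal using 2 <;> push_cast <;> ring
  -- conclude: F m ≥ m + 4 - w for m ≥ 1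
  have hFm : ∀ m : ℕ, 1 ≤ m → (m : ℤ) + 4 - (w : ℤ) ≤ F m := by
    intro m hm
    obtain ⟨n, rfl⟩ := Nat.exists_eq_add_of_le hm
    have h1 := hmain n
    have h2 := hbound1 n
    have h3 := hsplit n
    have hd1 : (u 1 : ℤ) - (u 0 : ℤ) ≤ (w : ℤ) := by
      have h5 : u 1 ≤ u 0 + w := hle 0
      have h6 := hge 0
      omega
    have : 2 * F (n+1) ≥ 2 * F 0 + 2 * ((n : ℤ) + 1) + 2 - 2 * ((u 1 : ℤ) - (u 0 : ℤ)) := by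
      linarith
    have hgoal : ((1 + n : ℕ) : ℤ) + 4 - (w : ℤ) ≤ F (1 + n) := by
      have he : (1 + n) = (n + 1) := by omega
      rw [he]
      push_cast
      linarith
    exact hgoal
  -- identify the biUnion with Icc 0 (u m + w)
  have hI : ∀ m : ℕ, ((Finset.range (m+1)).biUnion
      (fun k => Finset.Icc (u k - w) (u k + w))) = Finset.Icc 0 (u m + w) := by
    intro m
    induction m with
    | zero =>
      rw [show (0:ℕ)+1 = 1 from rfl, Finset.range_one, Finset.singleton_biUnion]
      congr 1
      omega
    | succ n ih =>
      rw [Finset.range_add_one, Finset.biUnion_insert, ih]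
      ext x
      simp only [Finset.mem_Icc, Finset.mem_union]
      have h1 := hstep n
      have h2 := hle n
      have h3 := hge (n+1)
      omega
  -- finish
  intro m hm
  have hm1 : 1 ≤ m := by omega
  have hFmi := hFm m hm1
  rw [hI m]
  have hreal : ((m : ℤ) + 4 - (w : ℤ) : ℝ) ≤ ((F m : ℤ) : ℝ) := by
    exact_mod_cast hFmi
  have : (F m : ℝ) = (biasOf c (Finset.Icc 0 (u m + w)) : ℝ) := by rw [hF]
  rw [← this]
  push_cast at hreal ⊢
  have hwr : (1 : ℝ) ≤ (w : ℝ) := by exact_mod_cast hw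
  linarith
end

section
/- In the setting of the infinite line analysis (u_k the sequence of rightmost α nodes in successive neighbourhoods, with d_k = u_k - u_{k-1} ∈ [1, w]): no position belongs to 5 or more of the neighbourhoods N(u_k) = [u_k - w, u_k + w]; that is, for every position v there do not exist k with v ∈ N(u_{k-2}) ∩ N(u_{k-1}) ∩ N(u_k) ∩ N(u_{k+1}) ∩ N(u_{k+2}). -/
theorem no_position_in_five_neighbourhoods
    (w : ℕ) (hw : 1 ≤ w) (c : ℕ → Bool)
    (u : ℕ → ℕ) (hu0 : u 0 = w)
    (huα : ∀ k, c (u k) = true)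
    (hd : ∀ k, u k < u (k+1) ∧ u (k+1) ≤ u k + w)
    (hmax : ∀ k, ∀ a ∈ Finset.Icc (u k - w) (u k + w), c a = true → a ≤ u (k+1)) :
    ∀ (k : ℕ) (v : ℕ),
      ¬ (v ∈ Finset.Icc (u k - w) (u k + w) ∧
         v ∈ Finset.Icc (u (k+1) - w) (u (k+1) + w) ∧
         v ∈ Finset.Icc (u (k+2) - w) (u (k+2) + w) ∧
         v ∈ Finset.Icc (u (k+3) - w) (u (k+3) + w) ∧
         v ∈ Finset.Icc (u (k+4) - w) (u (k+4) + w)) := by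
  have key : ∀ k, u k + w < u (k+2) := by
    intro k
    by_contra h
    push_neg at h
    have hmem : u (k+2) ∈ Finset.Icc (u k - w) (u k + w) := by
      refine Finset.mem_Icc.mpr ⟨?_, h⟩
      exact le_trans (Nat.sub_le _ _) (le_of_lt (lt_trans (hd k).1 (hd (k+1)).1))
    have := hmax k _ hmem (huα (k+2))
    exact absurd this (not_le.mpr (hd (k+1)).1)
  intro k v ⟨h0, _, _, _, h4⟩
  simp only [Finset.mem_Icc] at h0 h4
  have h1 : u (k+4) ≤ v + w := Nat.sub_le_iff_le_add.mp h4.1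
  have h2 : v + w ≤ u k + w + w := by omega
  have k1 := key k
  have k2 : u (k+2) + w < u (k+4) := key (k+2)
  omega
end
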